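/- Let q ∈ ℂ with 0 < |q| < 1, let N ∈ ℕ, let a ∈ ℂ with a ≠ 0, and let b ∈ ℂ with (bq;q)_N ≠ 0. Then (aq;q)_N/(bq;q)_N = ∑_{n=0}^{N} ((-a)^n q^{n(n+1)/2}/((q;q)_{N-n}(bq;q)_n)) ∑_{k=0}^{n} ((b;q)_k/(q;q)_k) a^{-k}. -/

import Mathlib

/-- The finite q-Pochhammer symbol `(w; q)_n = ∏_{i=0}^{n-1} (1 - w q^i)`. -/
noncomputable def qPoch (q w : ℂ) (n : ℕ) : ℂ :=
  ∏ i ∈ Finset.range n, (1 - w * q ^ i)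


lemma qPoch_zero (q w : ℂ) : qPoch q w 0 = 1 := by simp [qPoch]

lemma qPoch_succ (q w : ℂ) (n : ℕ) : qPoch q w (n+1) = qPoch q w n * (1 - w * q ^ n) :=
  Finset.prod_range_succ _ _

lemma qPoch_succ' (q w : ℂ) (n : ℕ) : qPoch q w (n+1) = (1 - w) * qPoch q (w*q) n := by
  rw [qPoch, Finset.prod_range_succ']
  simp only [pow_zero, mul_one]
  rw [mul_comm, qPoch]
  congr 1
  exact Finset.prod_congr rfl fun i _ => by ring

lemma tri_succ (n : ℕ) : (n+1)*(n+2)/2 = n*(n+1)/2 + (n+1) := by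
  have h1 : n*(n+1)/2*2 = n*(n+1) := Nat.div_mul_cancel (Nat.even_mul_succ_self n).two_dvd
  have h2 : (n+1)*(n+2)/2*2 = (n+1)*(n+2) := Nat.div_mul_cancel (Nat.even_mul_succ_self (n+1)).two_dvd
  nlinarith [h1, h2]

lemma Pq_succ (q : ℂ) (n : ℕ) : qPoch q q (n+1) = qPoch q q n * (1 - q ^ (n+1)) := by
  rw [qPoch_succ]; ring

lemma Pq_ne (q : ℂ) (h1 : ‖q‖ < 1) (n : ℕ) : qPoch q q n ≠ 0 := by
  rw [qPoch]
  apply Finset.prod_ne_zero_iff.2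
  intro i _
  intro h
  have hz : q * q ^ i = 1 := by linear_combination -h
  have : ‖q * q ^ i‖ < 1 := by
    rw [norm_mul, norm_pow]
    calc ‖q‖ * ‖q‖ ^ i ≤ ‖q‖ * 1 := by
          exact mul_le_mul_of_nonneg_left (pow_le_one₀ (norm_nonneg q) h1.le) (norm_nonneg q)
      _ < 1 := by rw [mul_one]; exact h1
  rw [hz] at this
  simp at this

lemma one_sub_pow_ne (q : ℂ) (h1 : ‖q‖ < 1) (n : ℕ) : 1 - q ^ (n+1) ≠ 0 := by
  have := Pq_ne q h1 (n+1)
  rw [Pq_succ] at this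
  exact right_ne_zero_of_mul this

lemma star (q : ℂ) (h1 : ‖q‖ < 1) (N : ℕ) :
    ∑ n ∈ Finset.range (N+1),
      (-1:ℂ)^n * q^(n*(n+1)/2) / (qPoch q q (N-n) * qPoch q q (n+1))
      = 1 / qPoch q q (N+1) := by
  induction N with
  | zero => simp [qPoch_zero]
  | succ M ih =>
    have hP := Pq_ne q h1
    have hne := one_sub_pow_ne q h1
    -- multiply goal by (1 - q^(M+2))
    have key : (1 - q^(M+2)) * ∑ n ∈ Finset.range (M+2),
        (-1:ℂ)^n * q^(n*(n+1)/2) / (qPoch q q (M+1-n) * qPoch q q (n+1))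
        = 1 / qPoch q q (M+1) := by
      rw [Finset.sum_range_succ, mul_add, Finset.mul_sum]
      -- pointwise split for n ≤ M
      have split : ∀ n ∈ Finset.range (M+1),
          (1 - q^(M+2)) * ((-1:ℂ)^n * q^(n*(n+1)/2) / (qPoch q q (M+1-n) * qPoch q q (n+1)))
          = (-1:ℂ)^n * q^(n*(n+1)/2) / (qPoch q q (M-n) * qPoch q q (n+1))
            + (-1:ℂ)^n * (q^(n*(n+1)/2) * q^(M+1-n)) / (qPoch q q (n) * qPoch q q (M+1-n)) := by
        intro n hn
        have hn' : n ≤ M := Nat.lt_succ_iff.mp (Finset.mem_range.mp hn)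
        obtain ⟨j, hj⟩ : ∃ j, M - n = j ∧ n + j = M := ⟨M - n, rfl, by omega⟩
        obtain ⟨hj1, hj2⟩ := hj
        have hM1n : M + 1 - n = j + 1 := by omega
        rw [hj1, hM1n, Pq_succ q j, Pq_succ q n]
        have hq2 : q^(j+1) * q^(n+1) = q^(M+2) := by rw [← pow_add]; congr 1; omega
        rw [← hq2]
        field_simp [hP, hne]
        ring
      rw [Finset.sum_congr rfl split, Finset.sum_add_distrib]
      -- second sum: peel first, shift
      have e2 : ∑ n ∈ Finset.range (M+1),
          (-1:ℂ)^n * (q^(n*(n+1)/2) * q^(M+1-n)) / (qPoch q q (n) * qPoch q q (M+1-n))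
          = q^(M+1) / qPoch q q (M+1)
            - q^(M+1) * ∑ i ∈ Finset.range M,
              (-1:ℂ)^i * q^(i*(i+1)/2) / (qPoch q q (M-i) * qPoch q q (i+1)) := by
        rw [Finset.sum_range_succ']
        have ptw : ∀ i ∈ Finset.range M,
            (-1:ℂ)^(i+1) * (q^((i+1)*(i+2)/2) * q^(M+1-(i+1))) / (qPoch q q (i+1) * qPoch q q (M+1-(i+1)))
            = -(q^(M+1) * ((-1:ℂ)^i * q^(i*(i+1)/2) / (qPoch q q (M-i) * qPoch q q (i+1)))) := by
          intro i hi
          have hi' : i < M := Finset.mem_range.mp hi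
          have h1n : M + 1 - (i+1) = M - i := by omega
          have hq3 : q^((i+1)*(i+2)/2) * q^(M+1-(i+1)) = q^(i*(i+1)/2) * q^(M+1) := by
            rw [← pow_add, ← pow_add]; congr 1; rw [tri_succ]; omega
          rw [hq3, h1n, pow_succ]
          field_simp [hP]
        rw [Finset.sum_congr rfl ptw, Finset.sum_neg_distrib, ← Finset.mul_sum]
        simp only [qPoch_zero, Nat.sub_zero, pow_zero, one_mul, mul_one, Nat.zero_mul, Nat.mul_zero]
        norm_num
        ring
      rw [e2]
      -- first sum is the IH sum
      rw [ih]
      -- remaining: pure algebra with last terms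
      have hlast : ∑ i ∈ Finset.range M,
          (-1:ℂ)^i * q^(i*(i+1)/2) / (qPoch q q (M-i) * qPoch q q (i+1))
          = 1 / qPoch q q (M+1)
            - (-1:ℂ)^M * q^(M*(M+1)/2) / (qPoch q q 0 * qPoch q q (M+1)) := by
        rw [← ih, Finset.sum_range_succ]; simp
      rw [hlast]
      have hMM : M + 1 - (M+1) = 0 := by omega
      rw [hMM, qPoch_zero]
      have hq4 : q^(M*(M+1)/2) * q^(M+1) = q^((M+1)*(M+2)/2) := by
        rw [← pow_add, tri_succ]
      have hPM2 : qPoch q q (M+1+1) = qPoch q q (M+1) * (1 - q^(M+2)) := Pq_succ q (M+1)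
      simp only [show M+1+1 = M+2 from rfl] at hPM2 ⊢
      rw [hPM2, ← hq4]
      field_simp [hP, hne]
      ring
    have h2ne : (1 : ℂ) - q^(M+2) ≠ 0 := hne (M+1)
    have : qPoch q q (M+2) = qPoch q q (M+1) * (1 - q^(M+2)) := Pq_succ q (M+1)
    field_simp [this, hP] at key ⊢
    rw [Pq_succ q (M+1)]
    linear_combination key

lemma qPoch_ne_of_le (q w : ℂ) {m n : ℕ} (h : m ≤ n) (hn : qPoch q w n ≠ 0) :
    qPoch q w m ≠ 0 := by
  rw [qPoch, Finset.prod_ne_zero_iff] at hn ⊢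
  intro i hi
  exact hn i (Finset.mem_range.mpr (lt_of_lt_of_le (Finset.mem_range.mp hi) h))

lemma qPoch_factor_ne (q w : ℂ) {i n : ℕ} (h : i < n) (hn : qPoch q w n ≠ 0) :
    1 - w * q ^ i ≠ 0 := by
  rw [qPoch, Finset.prod_ne_zero_iff] at hn
  exact hn i (Finset.mem_range.mpr h)

lemma step (q a b : ℂ) (h1 : ‖q‖ < 1) (ha : a ≠ 0) (N : ℕ)
    (hB : qPoch q (b*q) (N+1) ≠ 0) :
    (∑ n ∈ Finset.range (N+1+1),
        (-a) ^ n * q ^ (n * (n + 1) / 2) / (qPoch q q (N+1 - n) * qPoch q (b * q) n) *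
          ∑ k ∈ Finset.range (n + 1), qPoch q b k / qPoch q q k * a ^ (-(k : ℤ)))
      * (1 - b * q ^ (N+1))
    = (∑ n ∈ Finset.range (N + 1),
        (-a) ^ n * q ^ (n * (n + 1) / 2) / (qPoch q q (N - n) * qPoch q (b * q) n) *
          ∑ k ∈ Finset.range (n + 1), qPoch q b k / qPoch q q k * a ^ (-(k : ℤ)))
      * (1 - a * q ^ (N+1)) := by
  have hP := Pq_ne q h1
  have hBle : ∀ m, m ≤ N+1 → qPoch q (b*q) m ≠ 0 := fun m hm => qPoch_ne_of_le q _ hm hB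
  have hbf : ∀ i, i < N+1 → 1 - b * q * q ^ i ≠ 0 := fun i hi => qPoch_factor_ne q _ hi hB
  -- abbreviations
  set T : ℕ → ℂ := fun n => ∑ k ∈ Finset.range (n + 1), qPoch q b k / qPoch q q k * a ^ (-(k : ℤ)) with hTdef
  -- key scalar recurrence, multiplied by T (i+1)
  have ptw : ∀ i ∈ Finset.range N,
      (-a) ^ (i+1) * q ^ ((i+1) * (i+2) / 2) / (qPoch q q (N+1 - (i+1)) * qPoch q (b * q) (i+1)) * T (i+1)
        * (1 - b * q ^ (N+1))
      = (-a) ^ (i+1) * q ^ ((i+1) * (i+2) / 2) / (qPoch q q (N - (i+1)) * qPoch q (b * q) (i+1)) * T (i+1)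
        - a * q ^ (N+1) * ((-a) ^ i * q ^ (i * (i + 1) / 2) / (qPoch q q (N - i) * qPoch q (b * q) i) * T (i+1)) := by
    intro i hi
    have hi' : i < N := Finset.mem_range.mp hi
    obtain ⟨j, hj2⟩ : ∃ j, (i+1) + j = N := ⟨N - (i+1), by omega⟩
    have e1 : N + 1 - (i+1) = j + 1 := by omega
    have e2 : N - (i+1) = j := by omega
    have e3 : N - i = j + 1 := by omega
    rw [e1, e2, e3, Pq_succ q j, qPoch_succ q (b*q) i]
    have p1 : q ^ ((i+1)*(i+2)/2) = q ^ (i*(i+1)/2) * q ^ (i+1) := by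
      rw [← pow_add, tri_succ]
    have p2 : q ^ (N+1) = q ^ (j+1) * q ^ (i+1) := by rw [← pow_add]; congr 1; omega
    rw [p1, p2]
    have h2 : (1:ℂ) - q ^ (j+1) ≠ 0 := by
      have := hP (j+1); rw [Pq_succ] at this; exact right_ne_zero_of_mul this
    have h3 : (1:ℂ) - b * q * q ^ i ≠ 0 := hbf i (by omega)
    field_simp [hP, hBle i (by omega)]
    ring
  -- last term identity
  have hlast :
      (-a) ^ (N+1) * q ^ ((N+1) * (N+2) / 2) / (qPoch q q (N+1 - (N+1)) * qPoch q (b * q) (N+1)) * T (N+1)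
        * (1 - b * q ^ (N+1))
      = -(a * q ^ (N+1) * ((-a) ^ N * q ^ (N * (N + 1) / 2) / (qPoch q q (N - N) * qPoch q (b * q) N) * T (N+1))) := by
    rw [Nat.sub_self, Nat.sub_self, qPoch_zero, qPoch_succ q (b*q) N]
    have p1 : q ^ ((N+1)*(N+2)/2) = q ^ (N*(N+1)/2) * q ^ (N+1) := by
      rw [← pow_add, tri_succ]
    rw [p1]
    have h3 : (1:ℂ) - b * q * q ^ N ≠ 0 := hbf N (by omega)
    have h4 : (1:ℂ) - b * q ^ (N+1) = 1 - b * q * q ^ N := by ring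
    rw [h4]
    field_simp [hBle N (by omega)]
    ring
  -- first term value
  have hf0 :
      (-a) ^ 0 * q ^ (0 * (0 + 1) / 2) / (qPoch q q (N+1 - 0) * qPoch q (b * q) 0) * T 0
        * (1 - b * q ^ (N+1))
      = (1 - b * q ^ (N+1)) / qPoch q q (N+1) := by
    simp [hTdef, qPoch_zero]; ring
  -- the B identity via star
  have hC0 : (-a) ^ 0 * q ^ (0 * (0 + 1) / 2) / (qPoch q q (N - 0) * qPoch q (b * q) 0) * T 0
      = 1 / qPoch q q N := by
    simp [hTdef, qPoch_zero]
  have hBkey : a * q ^ (N+1) *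
      ((∑ n ∈ Finset.range (N+1),
          (-a) ^ n * q ^ (n * (n + 1) / 2) / (qPoch q q (N - n) * qPoch q (b * q) n) * T (n+1))
        - ∑ n ∈ Finset.range (N+1),
          (-a) ^ n * q ^ (n * (n + 1) / 2) / (qPoch q q (N - n) * qPoch q (b * q) n) * T n)
      = (1 - b * q ^ (N+1)) / qPoch q q (N+1) - 1 / qPoch q q N := by
    rw [← Finset.sum_sub_distrib]
    have ptw2 : ∀ n ∈ Finset.range (N+1),
        ((-a) ^ n * q ^ (n * (n + 1) / 2) / (qPoch q q (N - n) * qPoch q (b * q) n) * T (n+1)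
          - (-a) ^ n * q ^ (n * (n + 1) / 2) / (qPoch q q (N - n) * qPoch q (b * q) n) * T n)
        = (1 - b)/a * ((-1:ℂ)^n * q^(n*(n+1)/2) / (qPoch q q (N-n) * qPoch q q (n+1))) := by
      intro n hn
      have hn' : n < N + 1 := Finset.mem_range.mp hn
      have hT1 : T (n+1) = T n + qPoch q b (n+1) / qPoch q q (n+1) * a ^ (-((n+1:ℕ) : ℤ)) := by
        simp only [hTdef]
        rw [Finset.sum_range_succ]
      rw [hT1]
      rw [qPoch_succ' q b n]
      have hz : a ^ (-((n+1:ℕ) : ℤ)) = (a ^ (n+1))⁻¹ := by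
        rw [zpow_neg, zpow_natCast]
      rw [hz]
      rw [show ((-a)^n : ℂ) = (-1)^n * a^n from by rw [neg_pow]]
      have hBn := hBle n (by omega)
      have han : (a:ℂ)^(n+1) ≠ 0 := pow_ne_zero _ ha
      field_simp [hP, hBn, han, pow_ne_zero _ ha]
      ring
    rw [Finset.sum_congr rfl ptw2, ← Finset.mul_sum, star q h1 N]
    have hPN1 : qPoch q q (N+1) = qPoch q q N * (1 - q^(N+1)) := Pq_succ q N
    rw [hPN1]
    have h2 : (1:ℂ) - q ^ (N+1) ≠ 0 := by
      have := hP (N+1); rw [Pq_succ] at this; exact right_ne_zero_of_mul this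
    field_simp [hP]
    ring
  -- assemble
  rw [Finset.sum_mul, Finset.sum_range_succ, Finset.sum_range_succ']
  rw [Finset.sum_congr rfl ptw]
  have hS1 := Finset.sum_range_succ' (fun n => (-a) ^ n * q ^ (n * (n + 1) / 2) / (qPoch q q (N - n) * qPoch q (b * q) n) * T n) N
  have hS2 := Finset.sum_range_succ (fun n => (-a) ^ n * q ^ (n * (n + 1) / 2) / (qPoch q q (N - n) * qPoch q (b * q) n) * T (n+1)) N
  rw [Finset.sum_sub_distrib, ← Finset.mul_sum]
  linear_combination (-1 : ℂ) * hS1 + (a * q^(N+1)) * hS2 + (-1 : ℂ) * hC0 + (-1 : ℂ) * hBkey + hf0 + hlast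

theorem stmt5 (q : ℂ) (h0 : 0 < ‖q‖) (h1 : ‖q‖ < 1)
    (N : ℕ) (a : ℂ) (ha : a ≠ 0) (b : ℂ) (hb : qPoch q (b * q) N ≠ 0) :
    qPoch q (a * q) N / qPoch q (b * q) N =
      ∑ n ∈ Finset.range (N + 1),
        (-a) ^ n * q ^ (n * (n + 1) / 2) / (qPoch q q (N - n) * qPoch q (b * q) n) *
          ∑ k ∈ Finset.range (n + 1), qPoch q b k / qPoch q q k * a ^ (-(k : ℤ)) := by
  induction N with
  | zero =>
    simp [qPoch_zero]
  | succ M ih =>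
    have hbM : qPoch q (b * q) M ≠ 0 := qPoch_ne_of_le q _ (Nat.le_succ M) hb
    have hfac : (1 : ℂ) - b * q ^ (M+1) ≠ 0 := by
      have := qPoch_factor_ne q (b*q) (Nat.lt_succ_self M) hb
      intro h; apply this; rw [← h]; ring
    have hstep := step q a b h1 ha M hb
    have ihe := ih hbM
    rw [qPoch_succ q (a*q) M, qPoch_succ q (b*q) M]
    have e1 : (1:ℂ) - a * q * q ^ M = 1 - a * q ^ (M+1) := by ring
    have e2 : (1:ℂ) - b * q * q ^ M = 1 - b * q ^ (M+1) := by ring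
    rw [e1, e2]
    rw [← ihe] at hstep
    have hsum : ∑ n ∈ Finset.range (M + 1 + 1),
        (-a) ^ n * q ^ (n * (n + 1) / 2) / (qPoch q q (M + 1 - n) * qPoch q (b * q) n) *
          ∑ k ∈ Finset.range (n + 1), qPoch q b k / qPoch q q k * a ^ (-(k : ℤ))
        = qPoch q (a * q) M / qPoch q (b * q) M * (1 - a * q ^ (M+1)) / (1 - b * q ^ (M+1)) := by
      field_simp at hstep ⊢
      linear_combination hstep
    rw [hsum]
    field_simp
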